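/- Let M be a total model of T = T₀ ∪ K where K is a set of clauses over Π₀ ∪ Σ, and let T be a finite set of ground quasi-flat Σ-terms closed under subterms containing all ground terms of K. Define the partial structure M|_T to have the same universe and Π₀-operations as M, with each extension function f ∈ Σ defined at a tuple (a₁,…,aₙ) iff there exist terms t₁,…,tₙ with (tᵢ)_M = aᵢ and f(t₁,…,tₙ) ∈ T (taking the value f_M(a₁,…,aₙ) in that case). Then (1) M|_T is a weak partial model of T₀ ∪ K whose Π₀-reduct is a total model of T₀, and (2) M|_T satisfies every instance in K[T] with all extension terms of K[T] defined. -/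

import Mathlib

open FirstOrder FirstOrder.Language

universe u v w x y

namespace PaperFOL

/-- A sentence is universal: the universal closure of a quantifier-free formula. -/
def IsUniversalSentence {L : FirstOrder.Language.{u, v}} (φ : L.Sentence) : Prop :=
  ∃ (n : ℕ) (ψ : L.BoundedFormula Empty n), ψ.IsQF ∧ φ = ψ.alls

/-- Two theories over the same signature are co-theories iff they have the same
universal consequences. -/
def CoTheories {L : FirstOrder.Language.{u, v}} (T₁ T₂ : L.Theory) : Prop :=
  ∀ φ : L.Sentence, IsUniversalSentence φ → (T₁ ⊨ᵇ φ ↔ T₂ ⊨ᵇ φ)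

/-- `T` is model complete: every embedding between models of `T` is elementary. -/
def IsModelComplete {L : FirstOrder.Language.{u, v}} (T : L.Theory) : Prop :=
  ∀ (M N : Type w) [L.Structure M] [L.Structure N], M ⊨ T → N ⊨ T →
    ∀ (f : M ↪[L] N) (k : ℕ) (φ : L.Formula (Fin k)) (x : Fin k → M),
      φ.Realize (f ∘ x) ↔ φ.Realize x

/-- `T` allows quantifier elimination. -/
def HasQE {L : FirstOrder.Language.{u, v}} (T : L.Theory) : Prop :=
  ∀ {n : ℕ} (φ : L.BoundedFormula Empty n),
    ∃ ψ : L.BoundedFormula Empty n, ψ.IsQF ∧ T ⊨ᵇ φ.iff ψ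

/-- `T` has the strong sub-amalgamation property. -/
def StrongSubAmalgamation {L : FirstOrder.Language.{u, v}} (T : L.Theory) : Prop :=
  ∀ (A M₁ M₂ : Type w) [L.Structure A] [L.Structure M₁] [L.Structure M₂],
    M₁ ⊨ T → M₂ ⊨ T →
    ∀ (f₁ : A ↪[L] M₁) (f₂ : A ↪[L] M₂),
      ∃ (N : Theory.ModelType.{u, v, w} T) (g₁ : M₁ ↪[L] N) (g₂ : M₂ ↪[L] N),
        (∀ a, g₁ (f₁ a) = g₂ (f₂ a)) ∧
        (∀ m₁ m₂, g₁ m₁ = g₂ m₂ → ∃ a, m₁ = f₁ a ∧ m₂ = f₂ a)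

end PaperFOL

namespace PaperLoc

variable {B E : FirstOrder.Language.{u, v}}

/-! ## Partial structures

A partial `(B.sum E)`-structure: total on the base signature `B`, with possibly partial
interpretations of the extension function symbols from `E`. -/

structure PStruct (B E : FirstOrder.Language.{u, v}) (M : Type w) where
  bfun : ∀ {n : ℕ}, B.Functions n → (Fin n → M) → M
  brel : ∀ {n : ℕ}, B.Relations n → (Fin n → M) → Prop
  efun : ∀ {n : ℕ}, E.Functions n → (Fin n → M) → Option M
  erel : ∀ {n : ℕ}, E.Relations n → (Fin n → M) → Prop

/-- The total base reduct of a partial structure. -/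
def PStruct.bStructure {M : Type w} (P : PStruct B E M) : B.Structure M :=
  { funMap := fun {_} f xs => P.bfun f xs
    RelMap := fun {_} r xs => P.brel r xs }

/-- The interpretation of the relation symbols of the full signature. -/
def PStruct.relMap {M : Type w} (P : PStruct B E M) :
    ∀ {n : ℕ}, (B.sum E).Relations n → (Fin n → M) → Prop
  | _, Sum.inl r => P.brel r
  | _, Sum.inr r => P.erel r

/-- The partial structure corresponding to a total structure for the full signature. -/
def totalize {M : Type w} (S : (B.sum E).Structure M) : PStruct B E M where
  bfun := fun {_} f xs => S.funMap (Sum.inl f) xs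
  brel := fun {_} r xs => S.RelMap (Sum.inl r) xs
  efun := fun {_} f xs => some (S.funMap (Sum.inr f) xs)
  erel := fun {_} r xs => S.RelMap (Sum.inr r) xs

/-- Partial evaluation of terms in a partial structure: `PRealize P v t x` holds iff the
term `t` is defined under the valuation `v` and evaluates to `x`. -/
inductive PRealize {M : Type w} (P : PStruct B E M) {α : Type x} (v : α → M) :
    (B.sum E).Term α → M → Prop
  | var (a : α) : PRealize P v (Term.var a) (v a)
  | bfunc {n : ℕ} (f : B.Functions n) (ts : Fin n → (B.sum E).Term α) (xs : Fin n → M) :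
      (∀ i, PRealize P v (ts i) (xs i)) →
      PRealize P v (Term.func (Sum.inl f) ts) (P.bfun f xs)
  | efunc {n : ℕ} (f : E.Functions n) (ts : Fin n → (B.sum E).Term α) (xs : Fin n → M) (y : M) :
      (∀ i, PRealize P v (ts i) (xs i)) → P.efun f xs = some y →
      PRealize P v (Term.func (Sum.inr f) ts) y

/-! ## Syntax: literals and clauses -/

/-- Literals over a language `L` with (free) constants/variables from `γ`. -/
inductive Lit (L : FirstOrder.Language.{u, v}) (γ : Type w) where
  | eq (pos : Bool) (t₁ t₂ : L.Term γ)
  | rel (pos : Bool) (n : ℕ) (r : L.Relations n) (ts : Fin n → L.Term γ)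

/-- A clause is a (finite) disjunction of literals. -/
abbrev Clause (L : FirstOrder.Language.{u, v}) (γ : Type w) := List (Lit L γ)

/-- The terms occurring (at the top level) in a literal. -/
def Lit.terms {L : FirstOrder.Language.{u, v}} {γ : Type x} : Lit L γ → Set (L.Term γ)
  | .eq _ t₁ t₂ => {t₁, t₂}
  | .rel _ _ _ ts => Set.range ts

/-- Applying a substitution to a literal. -/
def Lit.subst {L : FirstOrder.Language.{u, v}} {γ : Type x} {δ : Type y} :
    Lit L γ → (γ → L.Term δ) → Lit L δ
  | .eq pos t₁ t₂, σ => .eq pos (t₁.subst σ) (t₂.subst σ)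
  | .rel pos n r ts, σ => .rel pos n r (fun i => (ts i).subst σ)

/-- Renaming the variables/constants of a literal. -/
def Lit.relabel {L : FirstOrder.Language.{u, v}} {γ : Type x} {δ : Type y} :
    Lit L γ → (γ → δ) → Lit L δ
  | .eq pos t₁ t₂, h => .eq pos (t₁.relabel h) (t₂.relabel h)
  | .rel pos n r ts, h => .rel pos n r (fun i => (ts i).relabel h)

/-- The subterm relation. -/
inductive Subterm {L : FirstOrder.Language.{u, v}} {γ : Type x} : L.Term γ → L.Term γ → Prop
  | refl (t : L.Term γ) : Subterm t t
  | func {n : ℕ} (f : L.Functions n) (ts : Fin n → L.Term γ) (i : Fin n) {t : L.Term γ} :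
      Subterm t (ts i) → Subterm t (Term.func f ts)

/-- The variable/constant `c` occurs in the term `t`. -/
def VarInTerm {L : FirstOrder.Language.{u, v}} {γ : Type x} (c : γ) (t : L.Term γ) : Prop :=
  Subterm (Term.var c) t

/-- A term is an extension term: its head symbol is an extension function symbol. -/
def IsExtTerm {γ : Type x} : (B.sum E).Term γ → Prop
  | Term.func (Sum.inr _) _ => True
  | _ => False

/-- A term contains no extension symbols (it is a pure base term). -/
inductive NoExt {γ : Type x} : (B.sum E).Term γ → Prop
  | var (a : γ) : NoExt (Term.var a)
  | func {n : ℕ} (f : B.Functions n) (ts : Fin n → (B.sum E).Term γ) :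
      (∀ i, NoExt (ts i)) → NoExt (Term.func (Sum.inl f) ts)

/-- A term is quasi-flat: the arguments of every extension-headed subterm are pure base terms. -/
def IsQuasiFlat {γ : Type x} (t : (B.sum E).Term γ) : Prop :=
  ∀ (s : (B.sum E).Term γ), Subterm s t →
    ∀ {n : ℕ} (f : E.Functions n) (ts : Fin n → (B.sum E).Term γ),
      s = Term.func (Sum.inr f) ts → ∀ i, NoExt (B := B) (E := E) (ts i)

/-- A term is flat: the arguments of every extension-headed subterm are
variables (resp. constants). -/
def IsFlatTerm {γ : Type x} (t : (B.sum E).Term γ) : Prop :=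
  ∀ (s : (B.sum E).Term γ), Subterm s t →
    ∀ {n : ℕ} (f : E.Functions n) (ts : Fin n → (B.sum E).Term γ),
      s = Term.func (Sum.inr f) ts → ∀ i, ∃ x : γ, ts i = Term.var x

/-- The term `t` occurs in the clause `D`. -/
def TermInClause {L : FirstOrder.Language.{u, v}} {γ : Type x}
    (t : L.Term γ) (D : Clause L γ) : Prop :=
  ∃ l ∈ D, ∃ s ∈ Lit.terms l, Subterm t s

/-- The term `t` occurs in some clause of the set `G`. -/
def TermInClauses {L : FirstOrder.Language.{u, v}} {γ : Type x}
    (t : L.Term γ) (G : Set (Clause L γ)) : Prop :=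
  ∃ D ∈ G, TermInClause t D

/-- The variable `x` occurs in the clause `C`. -/
def VarInClause {L : FirstOrder.Language.{u, v}} {γ : Type x} (x : γ) (C : Clause L γ) : Prop :=
  TermInClause (Term.var x) C

/-- The variable `x` occurs below an extension function in the clause `C`. -/
def VarBelowExt {γ : Type x} (x : γ) (C : Clause (B.sum E) γ) : Prop :=
  ∃ u : (B.sum E).Term γ, IsExtTerm (B := B) (E := E) u ∧ TermInClause u C ∧ VarInTerm x u

/-- A clause (with universally quantified variables) is flat w.r.t. the extension symbols. -/
def ClauseFlat {γ : Type x} (C : Clause (B.sum E) γ) : Prop :=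
  ∀ l ∈ C, ∀ s ∈ Lit.terms l, IsFlatTerm (B := B) (E := E) s

/-- A clause is linear w.r.t. the extension symbols. -/
def ClauseLinear {γ : Type x} (C : Clause (B.sum E) γ) : Prop :=
  (∀ u₁ u₂ : (B.sum E).Term γ,
    IsExtTerm (B := B) (E := E) u₁ → IsExtTerm (B := B) (E := E) u₂ →
    TermInClause u₁ C → TermInClause u₂ C →
    (∃ x, VarInTerm x u₁ ∧ VarInTerm x u₂) → u₁ = u₂) ∧
  (∀ u : (B.sum E).Term γ, TermInClause u C →
    ∀ {n : ℕ} (f : E.Functions n) (ts : Fin n → (B.sum E).Term γ),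
      u = Term.func (Sum.inr f) ts →
      ∀ (i j : Fin n) (x : γ), ts i = Term.var x → ts j = Term.var x → i = j)

/-- A ground term `t` (over the signature only) occurs in the clause set `K`. -/
def GroundTermOfK (K : Set (Clause (B.sum E) ℕ)) (t : (B.sum E).Term Empty) : Prop :=
  TermInClauses (t.relabel (Empty.elim : Empty → ℕ)) K

/-- The set of ground subterms of a set of ground clauses. -/
def stSet {L : FirstOrder.Language.{u, v}} {γ : Type x} (G : Set (Clause L γ)) :
    Set (L.Term γ) :=
  {t | TermInClauses t G}

/-! ## Instances of a clause set

`instancesC K S` is `K[S]`: the set of ground instances of clauses of `K` (over constants `γ`)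
in which all terms starting with an extension function symbol belong to `S`. -/
def instancesC {γ : Type x} (K : Set (Clause (B.sum E) ℕ)) (S : Set ((B.sum E).Term γ)) :
    Set (Clause (B.sum E) γ) :=
  { D | ∃ C ∈ K, ∃ σ : ℕ → (B.sum E).Term γ,
      D = C.map (fun l => l.subst σ) ∧
      ∀ t : (B.sum E).Term γ, IsExtTerm (B := B) (E := E) t → TermInClause t D → t ∈ S }

/-- `K[T]` for a set `T` of ground (variable-free) terms, keeping the result over the
variable type `ℕ`: instances where all extension terms are ground and belong to `T`, and
variables not occurring below an extension function are left unchanged. -/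
def instancesGround (K : Set (Clause (B.sum E) ℕ)) (T : Set ((B.sum E).Term Empty)) :
    Set (Clause (B.sum E) ℕ) :=
  { D | ∃ C ∈ K, ∃ σ : ℕ → (B.sum E).Term ℕ,
      D = C.map (fun l => l.subst σ) ∧
      (∀ x : ℕ, ¬ VarBelowExt (B := B) (E := E) x C → σ x = Term.var x) ∧
      (∀ t : (B.sum E).Term ℕ, IsExtTerm (B := B) (E := E) t → TermInClause t D →
        ∃ t₀ ∈ T, t = t₀.relabel (Empty.elim : Empty → ℕ)) }

/-! ## Semantics of literals and clauses in partial structures -/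

/-- All terms of the literal are defined in the partial structure. -/
def LitDefined {M : Type w} (P : PStruct B E M) {γ : Type x} (v : γ → M) :
    Lit (B.sum E) γ → Prop
  | .eq _ t₁ t₂ => (∃ x, PRealize P v t₁ x) ∧ (∃ x, PRealize P v t₂ x)
  | .rel _ _ _ ts => ∀ i, ∃ x, PRealize P v (ts i) x

/-- The literal is defined and true in the partial structure. -/
def LitHolds {M : Type w} (P : PStruct B E M) {γ : Type x} (v : γ → M) :
    Lit (B.sum E) γ → Prop
  | .eq pos t₁ t₂ => ∃ x₁ x₂, PRealize P v t₁ x₁ ∧ PRealize P v t₂ x₂ ∧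
      (if pos then x₁ = x₂ else x₁ ≠ x₂)
  | .rel pos n r ts => ∃ xs : Fin n → M, (∀ i, PRealize P v (ts i) (xs i)) ∧
      (if pos then P.relMap r xs else ¬ P.relMap r xs)

/-- Weak satisfaction of a clause in a partial structure under a valuation: either some
literal has an undefined term, or some literal is true. -/
def WeakSatClause {M : Type w} (P : PStruct B E M) {γ : Type x} (v : γ → M)
    (D : Clause (B.sum E) γ) : Prop :=
  (∃ l ∈ D, ¬ LitDefined P v l) ∨ (∃ l ∈ D, LitHolds P v l)

/-- A weak partial model of `T₀ ∪ K`: the (total) base reduct is a model of the base theory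
`T₀`, and every clause of `K` is weakly satisfied under every valuation. -/
structure WeakModel (T₀ : B.Theory) (K : Set (Clause (B.sum E) ℕ)) (M : Type w)
    (P : PStruct B E M) : Prop where
  nonempty : Nonempty M
  base : @Theory.Model B M P.bStructure T₀
  clauses : ∀ C ∈ K, ∀ v : ℕ → M, WeakSatClause P v C

/-- A weak embedding of partial structures. -/
structure WeakEmb {M N : Type w} (P : PStruct B E M) (Q : PStruct B E N) (h : M → N) :
    Prop where
  inj : Function.Injective h
  bfun : ∀ {n : ℕ} (f : B.Functions n) (xs : Fin n → M), h (P.bfun f xs) = Q.bfun f (h ∘ xs)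
  brel : ∀ {n : ℕ} (r : B.Relations n) (xs : Fin n → M), P.brel r xs ↔ Q.brel r (h ∘ xs)
  erel : ∀ {n : ℕ} (r : E.Relations n) (xs : Fin n → M), P.erel r xs ↔ Q.erel r (h ∘ xs)
  efun : ∀ {n : ℕ} (f : E.Functions n) (xs : Fin n → M) (y : M),
      P.efun f xs = some y → Q.efun f (h ∘ xs) = some (h y)

/-- The set of defined extension terms (with the elements of `M` as constants) of a
partial structure; this is `T(A)` in the paper. -/
def definedExtTerms {M : Type w} (P : PStruct B E M) : Set ((B.sum E).Term M) :=
  { t | ∃ (n : ℕ) (f : E.Functions n) (xs : Fin n → M),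
      (P.efun f xs).isSome ∧ t = Term.func (Sum.inr f) (fun i => Term.var (xs i)) }

/-- Condition `(Comp_f)`: every weak partial model of `T₀ ∪ K` (total on the base part,
with finitely many defined extension terms) weakly embeds, via the identity map,
into a total model of `T₀ ∪ K` with the same support. -/
def CompF (T₀ : B.Theory) (K : Set (Clause (B.sum E) ℕ)) : Prop :=
  ∀ (M : Type w) (P : PStruct B E M),
    WeakModel T₀ K M P → (definedExtTerms P).Finite →
    ∃ S : (B.sum E).Structure M,
      WeakModel T₀ K M (totalize S) ∧ WeakEmb P (totalize S) (id : M → M)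

open scoped Classical in
/-- The restriction `M|_T` of a total structure to a set `T` of ground terms: the extension
functions are only defined on tuples of elements named by the terms of `T`. -/
noncomputable def restrict {M : Type w} (S : (B.sum E).Structure M)
    (T : Set ((B.sum E).Term Empty)) : PStruct B E M where
  bfun := fun {_} f xs => S.funMap (Sum.inl f) xs
  brel := fun {_} r xs => S.RelMap (Sum.inl r) xs
  erel := fun {_} r xs => S.RelMap (Sum.inr r) xs
  efun := fun {n} f xs =>
    if ∃ ts : Fin n → (B.sum E).Term Empty,
        (Term.func (Sum.inr f) ts ∈ T ∧
          ∀ i, @Term.realize (B.sum E) M S Empty (fun e => e.elim) (ts i) = xs i)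
    then some (S.funMap (Sum.inr f) xs) else none

/-! ## Satisfiability of sets of ground clauses -/

/-- `A` is satisfiable w.r.t. `T₀` together with the uninterpreted extension symbols:
some total structure for the full signature whose base reduct is a model of `T₀`
satisfies all clauses of `A` (under some interpretation of the constants `γ`). -/
def SatUIF (T₀ : B.Theory) (γ : Type w) (A : Set (Clause (B.sum E) γ)) : Prop :=
  ∃ (M : Type w) (S : (B.sum E).Structure M) (v : γ → M), Nonempty M ∧
    (@Theory.Model B M (totalize S).bStructure T₀) ∧
    ∀ D ∈ A, WeakSatClause (totalize S) v D

/-- `A` is satisfiable w.r.t. the theory extension `T₀ ∪ K`. -/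
def SatExt (T₀ : B.Theory) (K : Set (Clause (B.sum E) ℕ)) (γ : Type w)
    (A : Set (Clause (B.sum E) γ)) : Prop :=
  ∃ (M : Type w) (S : (B.sum E).Structure M) (v : γ → M), Nonempty M ∧
    (@Theory.Model B M (totalize S).bStructure T₀) ∧
    (∀ C ∈ K, ∀ w : ℕ → M, WeakSatClause (totalize S) w C) ∧
    ∀ D ∈ A, WeakSatClause (totalize S) v D

end PaperLoc

/-! `M|_T` weakly embeds into `M` via the identity, and a weak embedding reflects every literal
whose terms are defined in its source. Hence each clause true in `M` is weakly true in `M|_T`,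
and so is each instance in `K[T]`. Its extension terms come from the subterm-closed set `T`,
so they are defined in `M|_T`. -/

namespace PaperLoc

variable {B E : FirstOrder.Language.{u, v}} {M : Type w}

section Partial

variable {P : PStruct B E M} {γ : Type x} {v : γ → M}

theorem PRealize.unique {t : (B.sum E).Term γ} {x y : M}
    (hx : PRealize P v t x) (hy : PRealize P v t y) : x = y := by
  induction hx generalizing y with
  | var a => cases hy; rfl
  | bfunc f ts xs _ ih =>
    cases hy with
    | bfunc _ _ ys hys => rw [funext fun i => ih i (hys i)]
  | efunc f ts xs z _ hz ih =>
    cases hy with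
    | efunc _ _ ys w hys hw =>
      rw [funext fun i => ih i (hys i), hw] at hz
      exact (Option.some.inj hz).symm

variable {N : Type w} {Q : PStruct B E N} {e : M → N}

theorem WeakEmb.relMap_iff (he : WeakEmb P Q e) {n : ℕ} (r : (B.sum E).Relations n)
    (xs : Fin n → M) : P.relMap r xs ↔ Q.relMap r (e ∘ xs) := by
  cases r with
  | inl r => exact he.brel r xs
  | inr r => exact he.erel r xs

theorem PRealize.map (he : WeakEmb P Q e) {t : (B.sum E).Term γ} {x : M}
    (h : PRealize P v t x) : PRealize Q (e ∘ v) t (e x) := by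
  induction h with
  | var a => exact PRealize.var a
  | bfunc f ts xs _ ih =>
    rw [he.bfun]
    exact PRealize.bfunc f ts (e ∘ xs) ih
  | efunc f ts xs y _ hy ih => exact PRealize.efunc f ts (e ∘ xs) (e y) ih (he.efun f xs y hy)

theorem LitHolds.of_weakEmb (he : WeakEmb P Q e) {l : Lit (B.sum E) γ}
    (hdef : LitDefined P v l) (hl : LitHolds Q (e ∘ v) l) : LitHolds P v l := by
  cases l with
  | eq pos t₁ t₂ =>
    obtain ⟨⟨x₁, hx₁⟩, ⟨x₂, hx₂⟩⟩ := hdef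
    obtain ⟨y₁, y₂, hy₁, hy₂, hy⟩ := hl
    obtain rfl := (hx₁.map he).unique hy₁
    obtain rfl := (hx₂.map he).unique hy₂
    refine ⟨x₁, x₂, hx₁, hx₂, ?_⟩
    cases pos
    · exact fun h => hy (congrArg e h)
    · exact he.inj hy
  | rel pos n r ts =>
    choose xs hxs using hdef
    obtain ⟨ys, hys, hy⟩ := hl
    obtain rfl : e ∘ xs = ys := funext fun i => ((hxs i).map he).unique (hys i)
    refine ⟨xs, hxs, ?_⟩
    cases pos
    · exact mt (he.relMap_iff r xs).mp hy
    · exact (he.relMap_iff r xs).mpr hy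

theorem WeakSatClause.of_weakEmb (he : WeakEmb P Q e) {D : Clause (B.sum E) γ}
    (hD : ∃ l ∈ D, LitHolds Q (e ∘ v) l) : WeakSatClause P v D := by
  by_cases hdef : ∀ l ∈ D, LitDefined P v l
  · obtain ⟨l, hlD, hl⟩ := hD
    exact Or.inr ⟨l, hlD, hl.of_weakEmb he (hdef l hlD)⟩
  · push Not at hdef
    exact Or.inl hdef

end Partial

section Total

variable (S : (B.sum E).Structure M) {γ : Type x}

theorem prealize_totalize (v : γ → M) (t : (B.sum E).Term γ) :
    PRealize (totalize S) v t (@Term.realize _ M S γ v t) := by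
  induction t with
  | var a => exact PRealize.var a
  | func f ts ih =>
    cases f with
    | inl f => exact PRealize.bfunc f ts _ ih
    | inr f => exact PRealize.efunc f ts _ _ ih rfl

theorem prealize_totalize_iff {v : γ → M} {t : (B.sum E).Term γ} {x : M} :
    PRealize (totalize S) v t x ↔ x = @Term.realize _ M S γ v t :=
  ⟨fun h => h.unique (prealize_totalize S v t), fun h => h ▸ prealize_totalize S v t⟩

theorem litDefined_totalize (v : γ → M) (l : Lit (B.sum E) γ) :
    LitDefined (totalize S) v l := by
  cases l with
  | eq pos t₁ t₂ => exact ⟨⟨_, prealize_totalize S v t₁⟩, ⟨_, prealize_totalize S v t₂⟩⟩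
  | rel pos n r ts => exact fun i => ⟨_, prealize_totalize S v (ts i)⟩

theorem exists_litHolds_of_weakSatClause_totalize {v : γ → M} {D : Clause (B.sum E) γ}
    (hD : WeakSatClause (totalize S) v D) : ∃ l ∈ D, LitHolds (totalize S) v l :=
  hD.resolve_left fun ⟨l, _, hl⟩ => hl (litDefined_totalize S v l)

theorem litHolds_totalize_subst {δ : Type y} (v : δ → M) (σ : γ → (B.sum E).Term δ)
    {l : Lit (B.sum E) γ}
    (hl : LitHolds (totalize S) (fun a => @Term.realize _ M S δ v (σ a)) l) :
    LitHolds (totalize S) v (l.subst σ) := by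
  let _ := S
  have realize_subst (t : (B.sum E).Term γ) {z : M}
      (ht : PRealize (totalize S) (fun a => (σ a).realize v) t z) :
      PRealize (totalize S) v (t.subst σ) z := by
    rw [prealize_totalize_iff] at ht ⊢
    rw [ht, Term.realize_subst]
  cases l with
  | eq pos t₁ t₂ =>
    obtain ⟨x₁, x₂, h₁, h₂, h⟩ := hl
    exact ⟨x₁, x₂, realize_subst t₁ h₁, realize_subst t₂ h₂, h⟩
  | rel pos n r ts =>
    obtain ⟨xs, hxs, h⟩ := hl
    exact ⟨xs, fun i => realize_subst (ts i) (hxs i), h⟩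

end Total

section Restrict

variable (S : (B.sum E).Structure M) (T : Set ((B.sum E).Term Empty))

theorem weakEmb_restrict_totalize : WeakEmb (restrict S T) (totalize S) id where
  inj := Function.injective_id
  bfun _ _ := rfl
  brel _ _ := Iff.rfl
  erel _ _ := Iff.rfl
  efun f xs y hy := by
    simp only [restrict] at hy
    split at hy
    · exact hy
    · cases hy

theorem weakModel_restrict {T₀ : B.Theory} {K : Set (Clause (B.sum E) ℕ)}
    (hM : WeakModel T₀ K M (totalize S)) : WeakModel T₀ K M (restrict S T) where
  nonempty := hM.nonempty
  base := hM.base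
  clauses C hC v := WeakSatClause.of_weakEmb (weakEmb_restrict_totalize S T)
    (exists_litHolds_of_weakSatClause_totalize S (hM.clauses C hC v))

def evalArgs : (B.sum E).Term Empty → (B.sum E).Term M
  | Term.var e => e.elim
  | Term.func f ts => Term.func f fun i => Term.var (@Term.realize _ M S _ Empty.elim (ts i))

theorem definedExtTerms_restrict_subset :
    definedExtTerms (restrict S T) ⊆ evalArgs S '' T := by
  rintro _ ⟨n, f, xs, hdef, rfl⟩
  simp only [restrict] at hdef
  split at hdef
  · rename_i hts
    obtain ⟨ts, hT, hts⟩ := hts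
    refine ⟨_, hT, ?_⟩
    simp only [evalArgs, hts]
  · cases hdef

theorem finite_definedExtTerms_restrict (hfin : T.Finite) :
    (definedExtTerms (restrict S T)).Finite :=
  (hfin.image _).subset (definedExtTerms_restrict_subset S T)

theorem prealize_restrict_relabel {γ : Type x} (v : γ → M)
    (hsub : ∀ t s : (B.sum E).Term Empty, s ∈ T → Subterm t s → t ∈ T)
    {t : (B.sum E).Term Empty} (ht : t ∈ T) :
    PRealize (restrict S T) v (t.relabel Empty.elim) (@Term.realize _ M S _ Empty.elim t) := by
  induction t with
  | var a => exact a.elim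
  | func f ts ih =>
    have hts i : ts i ∈ T := hsub _ _ ht (Subterm.func f ts i (Subterm.refl _))
    cases f with
    | inl f => exact PRealize.bfunc f _ _ fun i => ih i (hts i)
    | inr f =>
      refine PRealize.efunc f _ _ _ (fun i => ih i (hts i)) ?_
      simp only [restrict]
      rw [if_pos ⟨ts, ht, fun i => rfl⟩]
      rfl

theorem weakSatClause_restrict_of_mem_instancesGround {T₀ : B.Theory}
    {K : Set (Clause (B.sum E) ℕ)} (hM : WeakModel T₀ K M (totalize S))
    {D : Clause (B.sum E) ℕ} (hD : D ∈ instancesGround (B := B) (E := E) K T) (v : ℕ → M) :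
    WeakSatClause (restrict S T) v D := by
  obtain ⟨C, hC, σ, rfl, -, -⟩ := hD
  obtain ⟨l, hlC, hl⟩ := exists_litHolds_of_weakSatClause_totalize S (hM.clauses C hC _)
  exact WeakSatClause.of_weakEmb (weakEmb_restrict_totalize S T)
    ⟨l.subst σ, List.mem_map_of_mem hlC, litHolds_totalize_subst S v σ hl⟩

end Restrict

end PaperLoc

theorem statement_11_general (B0 E : FirstOrder.Language.{u, v}) (T₀ : B0.Theory)
    (K : Set (PaperLoc.Clause (B0.sum E) ℕ)) (M : Type w) (S : (B0.sum E).Structure M)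
    (hM : PaperLoc.WeakModel T₀ K M (PaperLoc.totalize S))
    (T : Set ((B0.sum E).Term Empty)) (hfin : T.Finite)
    (hsub : ∀ t s : (B0.sum E).Term Empty, s ∈ T → PaperLoc.Subterm t s → t ∈ T) :
    (PaperLoc.WeakModel T₀ K M (PaperLoc.restrict S T) ∧
      (PaperLoc.definedExtTerms (PaperLoc.restrict S T)).Finite) ∧
    (∀ D ∈ PaperLoc.instancesGround (B := B0) (E := E) K T,
      (∀ v : ℕ → M, PaperLoc.WeakSatClause (PaperLoc.restrict S T) v D) ∧
      (∀ (t : (B0.sum E).Term ℕ) (v : ℕ → M), PaperLoc.IsExtTerm (B := B0) (E := E) t →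
        PaperLoc.TermInClause t D →
        ∃ x, PaperLoc.PRealize (PaperLoc.restrict S T) v t x)) := by
  refine ⟨⟨PaperLoc.weakModel_restrict S T hM,
    PaperLoc.finite_definedExtTerms_restrict S T hfin⟩, fun D hD => ⟨?_, ?_⟩⟩
  · exact PaperLoc.weakSatClause_restrict_of_mem_instancesGround S T hM hD
  · intro t v ht htD
    obtain ⟨-, -, -, -, -, hground⟩ := hD
    obtain ⟨t₀, ht₀, rfl⟩ := hground t ht htD
    exact ⟨_, PaperLoc.prealize_restrict_relabel S T v hsub ht₀⟩

/-- if `M` is a total model of `T₀ ∪ K` and `T` is a finite subterm-closed set of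
ground quasi-flat terms containing the ground terms of `K`, then the restriction `M|_T`
(1) is a weak partial model of `T₀ ∪ K` with total base part and finitely many defined
extension terms, and (2) weakly satisfies every instance in `K[T]`, with all extension terms
of `K[T]` defined. -/
theorem statement_11 (B0 E : FirstOrder.Language.{u, v}) (T₀ : B0.Theory)
    (K : Set (PaperLoc.Clause (B0.sum E) ℕ)) (M : Type w) (S : (B0.sum E).Structure M)
    (hM : PaperLoc.WeakModel T₀ K M (PaperLoc.totalize S))
    (T : Set ((B0.sum E).Term Empty)) (hfin : T.Finite)
    (hqf : ∀ t ∈ T, PaperLoc.IsQuasiFlat (B := B0) (E := E) t)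
    (hsub : ∀ t s : (B0.sum E).Term Empty, s ∈ T → PaperLoc.Subterm t s → t ∈ T)
    (hK : ∀ t : (B0.sum E).Term Empty, PaperLoc.GroundTermOfK (B := B0) (E := E) K t → t ∈ T) :
    (PaperLoc.WeakModel T₀ K M (PaperLoc.restrict S T) ∧
      (PaperLoc.definedExtTerms (PaperLoc.restrict S T)).Finite) ∧
    (∀ D ∈ PaperLoc.instancesGround (B := B0) (E := E) K T,
      (∀ v : ℕ → M, PaperLoc.WeakSatClause (PaperLoc.restrict S T) v D) ∧
      (∀ (t : (B0.sum E).Term ℕ) (v : ℕ → M), PaperLoc.IsExtTerm (B := B0) (E := E) t →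
        PaperLoc.TermInClause t D →
        ∃ x, PaperLoc.PRealize (PaperLoc.restrict S T) v t x)) :=
  statement_11_general B0 E T₀ K M S hM T hfin hsub
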